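/- Let G = (V,E) be a perfect graph, i.e., χ(G_X) = ω(G_X) and α(G_X) = θ(G_X) for every finite X ⊆ V, and let k be a positive integer. Then: (a) χ(G) ≤ k if and only if χ(G_X) ≤ k for every X ⊆ V with |X| = k + 1; and (b) θ(G) ≤ k if and only if θ(G_X) ≤ k for every X ⊆ V with |X| = k + 1. -/
import Mathlib


open Cardinal SimpleGraph

universe u

/-- A set of vertices is an anticlique (independent set) if its elements are
pairwise non-adjacent. -/
def IsAnticlique {V : Type u} (G : SimpleGraph V) (s : Set V) : Prop :=
  s.Pairwise fun u v => ¬ G.Adj u v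

/-- The clique number: the supremum of the cardinalities of cliques. -/
noncomputable def cardCliqueNum {V : Type u} (G : SimpleGraph V) : Cardinal.{u} :=
  ⨆ s : {s : Set V // G.IsClique s}, #s.1

/-- The stability number: the supremum of the cardinalities of anticliques. -/
noncomputable def cardStabilityNum {V : Type u} (G : SimpleGraph V) : Cardinal.{u} :=
  ⨆ s : {s : Set V // IsAnticlique G s}, #s.1

/-- The chromatic number: the smallest cardinality of a cover of the vertex set
by anticliques. -/
noncomputable def cardChromNum {V : Type u} (G : SimpleGraph V) : Cardinal.{u} :=
  sInf {κ | ∃ P : Set (Set V), (∀ s ∈ P, IsAnticlique G s) ∧ ⋃₀ P = Set.univ ∧ #P = κ}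

/-- The clique-cover number: the smallest cardinality of a cover of the vertex set
by cliques. -/
noncomputable def cliqueCoverNum {V : Type u} (G : SimpleGraph V) : Cardinal.{u} :=
  sInf {κ | ∃ P : Set (Set V), (∀ s ∈ P, G.IsClique s) ∧ ⋃₀ P = Set.univ ∧ #P = κ}

section aux
variable {V : Type u} (G : SimpleGraph V)

lemma chromSet_nonempty :
    {κ | ∃ P : Set (Set V), (∀ s ∈ P, IsAnticlique G s) ∧ ⋃₀ P = Set.univ ∧ #P = κ}.Nonempty := by
  refine ⟨_, Set.range (fun v : V => ({v} : Set V)), ?_, ?_, rfl⟩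
  · rintro s ⟨v, rfl⟩
    exact Set.pairwise_singleton v _
  · ext v
    simp only [Set.mem_sUnion, Set.mem_range, Set.mem_univ, iff_true]
    exact ⟨{v}, ⟨v, rfl⟩, rfl⟩

lemma cardChromNum_mem :
    ∃ P : Set (Set V), (∀ s ∈ P, IsAnticlique G s) ∧ ⋃₀ P = Set.univ ∧ #P = cardChromNum G :=
  csInf_mem (chromSet_nonempty G)

lemma cardChromNum_le {P : Set (Set V)} (h1 : ∀ s ∈ P, IsAnticlique G s)
    (h2 : ⋃₀ P = Set.univ) : cardChromNum G ≤ #P :=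
  csInf_le' ⟨P, h1, h2, rfl⟩

lemma cardChromNum_induce_le (X : Set V) : cardChromNum (G.induce X) ≤ cardChromNum G := by
  obtain ⟨P, hP, hU, hcard⟩ := cardChromNum_mem G
  have h1 : ∀ s ∈ (fun s => (Subtype.val : X → V) ⁻¹' s) '' P,
      IsAnticlique (G.induce X) s := by
    rintro _ ⟨s, hs, rfl⟩ a ha b hb hab habs
    exact hP s hs ha hb (fun h => hab (Subtype.ext h)) habs
  have h2 : ⋃₀ ((fun s => (Subtype.val : X → V) ⁻¹' s) '' P) = Set.univ := by
    ext a
    simp only [Set.sUnion_image, Set.mem_iUnion, Set.mem_preimage, Set.mem_univ, iff_true]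
    have : (a : V) ∈ ⋃₀ P := hU ▸ Set.mem_univ _
    obtain ⟨s, hs, has⟩ := this
    exact ⟨s, hs, has⟩
  calc cardChromNum (G.induce X) ≤ #((fun s => (Subtype.val : X → V) ⁻¹' s) '' P) :=
        cardChromNum_le _ h1 h2
    _ ≤ #P := Cardinal.mk_image_le
    _ = cardChromNum G := hcard

lemma colorable_of_cardChromNum_le {k : ℕ} (h : cardChromNum G ≤ k) : G.Colorable k := by
  obtain ⟨P, hP, hU, hcard⟩ := cardChromNum_mem G
  have hPk : #P ≤ (k : Cardinal.{u}) := hcard.symm ▸ h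
  have hfin : Finite P := Cardinal.lt_aleph0_iff_finite.mp (hPk.trans_lt (Cardinal.nat_lt_aleph0 k))
  haveI := Fintype.ofFinite P
  have hcardk : Fintype.card P ≤ k := by
    have := hPk
    rw [Cardinal.mk_fintype] at this
    exact_mod_cast this
  have hcover : ∀ v : V, ∃ s : P, v ∈ s.1 := by
    intro v
    have : v ∈ ⋃₀ P := hU ▸ Set.mem_univ _
    obtain ⟨s, hs, hvs⟩ := this
    exact ⟨⟨s, hs⟩, hvs⟩
  choose f hf using hcover
  refine ⟨SimpleGraph.Coloring.mk
    (fun v => Fin.castLE hcardk ((Fintype.equivFin P) (f v))) ?_⟩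
  intro u v huv hc
  have hfeq : f u = f v := (Fintype.equivFin P).injective (by
    apply Fin.castLE_injective hcardk hc)
  have hne : u ≠ v := G.ne_of_adj huv
  exact hP (f u).1 (f u).2 (hf u) (hfeq ▸ hf v) hne huv

lemma cardChromNum_le_of_colorable {k : ℕ} (h : G.Colorable k) : cardChromNum G ≤ k := by
  obtain ⟨C⟩ := h
  set P : Set (Set V) := Set.range (fun i : Fin k => {v | C v = i}) with hPdef
  have h1 : ∀ s ∈ P, IsAnticlique G s := by
    rintro _ ⟨i, rfl⟩ u hu v hv huv hadj
    exact C.valid hadj (hu.trans hv.symm)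
  have h2 : ⋃₀ P = Set.univ := by
    ext v
    simp only [hPdef, Set.sUnion_range, Set.mem_iUnion, Set.mem_setOf_eq, Set.mem_univ, iff_true]
    exact ⟨C v, rfl⟩
  calc cardChromNum G ≤ #P := cardChromNum_le G h1 h2
    _ ≤ (k : Cardinal.{u}) := by
        simpa using Cardinal.mk_range_le_lift (f := fun i : Fin k => {v | C v = i})

end aux

section mainlem
variable {V : Type u} (G : SimpleGraph V) (k : ℕ)

lemma clique_card_le
    (H : ∀ X : Set V, #X = (k : Cardinal.{u}) + 1 → cardChromNum (G.induce X) ≤ k)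
    (s : Set V) (hs : G.IsClique s) : #s ≤ k := by
  by_contra hlt
  push_neg at hlt
  have h1 : ((k + 1 : ℕ) : Cardinal.{u}) ≤ #s := by
    rw [Cardinal.nat_succ]
    exact Order.succ_le_of_lt hlt
  obtain ⟨p, hp⟩ := Cardinal.le_mk_iff_exists_set.mp h1
  set X : Set V := Subtype.val '' p with hXdef
  have hXs : X ⊆ s := by rintro _ ⟨⟨a, ha⟩, _, rfl⟩; exact ha
  have hXcard : #X = (k : Cardinal.{u}) + 1 := by
    rw [hXdef, Cardinal.mk_image_eq Subtype.val_injective, hp]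
    push_cast
    ring
  have hchrom := H X hXcard
  -- X is a clique, so every anticlique partition of `induce X` has ≥ k+1 parts
  have hbig : ((k : Cardinal.{u}) + 1) ≤ cardChromNum (G.induce X) := by
    apply le_csInf (chromSet_nonempty _)
    rintro κ ⟨Q, hQ, hU, rfl⟩
    have hcover : ∀ a : X, ∃ t : Q, a ∈ t.1 := by
      intro a
      have : a ∈ ⋃₀ Q := hU ▸ Set.mem_univ _
      obtain ⟨t, ht, hat⟩ := this
      exact ⟨⟨t, ht⟩, hat⟩
    choose g hg using hcover
    have hginj : Function.Injective g := by
      intro a b hab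
      by_contra hne
      have hvals : (a : V) ≠ (b : V) := fun h => hne (Subtype.ext h)
      have hadj : (G.induce X).Adj a b := hs (hXs a.2) (hXs b.2) hvals
      exact hQ (g a).1 (g a).2 (hg a) (hab ▸ hg b) hne hadj
    calc ((k : Cardinal.{u}) + 1) = #X := hXcard.symm
      _ ≤ #Q := Cardinal.mk_le_of_injective hginj
  have : ((k : Cardinal.{u}) + 1) ≤ (k : Cardinal.{u}) := hbig.trans hchrom
  have hklt : (k : Cardinal.{u}) < (k : Cardinal.{u}) + 1 := by
    have : ((k : ℕ) : Cardinal.{u}) < ((k + 1 : ℕ) : Cardinal.{u}) := by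
      exact_mod_cast Nat.lt_succ_self k
    simpa using this
  exact absurd this (not_le.mpr hklt)

lemma main_chrom
    (hperf : ∀ X : Set V, X.Finite →
      cardChromNum (G.induce X) = cardCliqueNum (G.induce X)) :
    cardChromNum G ≤ k ↔
      ∀ X : Set V, #X = (k : Cardinal.{u}) + 1 → cardChromNum (G.induce X) ≤ k := by
  constructor
  · intro h X _
    exact (cardChromNum_induce_le G X).trans h
  · intro H
    have hsmall := clique_card_le G k H
    have hfin : ∀ X : Set V, X.Finite → cardChromNum (G.induce X) ≤ k := by
      intro X hX
      rw [hperf X hX]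
      apply ciSup_le'
      rintro ⟨s, hs⟩
      have hclique : G.IsClique (Subtype.val '' s) := by
        rintro _ ⟨a, ha, rfl⟩ _ ⟨b, hb, rfl⟩ hab
        exact hs ha hb (fun h => hab (congrArg _ h))
      calc #s = #(Subtype.val '' s) := (Cardinal.mk_image_eq Subtype.val_injective).symm
        _ ≤ k := hsmall _ hclique
    apply cardChromNum_le_of_colorable
    have hhom : ∀ G' : G.Subgraph, G'.verts.Finite → G'.coe →g (⊤ : SimpleGraph (Fin k)) := by
      intro G' hG'
      exact (colorable_of_cardChromNum_le _ (hfin G'.verts hG')).some.comp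
        ⟨fun v => v, fun {a b} h => G'.adj_sub h⟩
    obtain ⟨C⟩ := SimpleGraph.nonempty_hom_of_forall_finite_subgraph_hom hhom
    exact ⟨C⟩

end mainlem

section compl
variable {V : Type u} (G : SimpleGraph V)

lemma anticlique_compl_iff (s : Set V) : IsAnticlique Gᶜ s ↔ G.IsClique s := by
  constructor
  · intro h a ha b hb hab
    by_contra hadj
    exact h ha hb hab ⟨hab, hadj⟩
  · intro h a ha b hb hab hadj
    exact hadj.2 (h ha hb hab)

lemma clique_compl_iff (s : Set V) : Gᶜ.IsClique s ↔ IsAnticlique G s := by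
  constructor
  · intro h a ha b hb hab hadj
    exact (h ha hb hab).2 hadj
  · intro h a ha b hb hab
    exact ⟨hab, h ha hb hab⟩

lemma cardChromNum_compl : cardChromNum Gᶜ = cliqueCoverNum G := by
  unfold cardChromNum cliqueCoverNum
  congr 1
  ext κ
  simp only [Set.mem_setOf_eq, anticlique_compl_iff]

lemma cardCliqueNum_compl : cardCliqueNum Gᶜ = cardStabilityNum G := by
  unfold cardCliqueNum cardStabilityNum
  show sSup _ = sSup _
  congr 1
  ext κ
  constructor
  · rintro ⟨⟨s, hs⟩, rfl⟩
    exact ⟨⟨s, (clique_compl_iff G s).mp hs⟩, rfl⟩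
  · rintro ⟨⟨s, hs⟩, rfl⟩
    exact ⟨⟨s, (clique_compl_iff G s).mpr hs⟩, rfl⟩

lemma induce_compl (X : Set V) : Gᶜ.induce X = (G.induce X)ᶜ := by
  ext a b
  simp only [comap_adj, Function.Embedding.coe_subtype, compl_adj]
  constructor
  · rintro ⟨h1, h2⟩
    exact ⟨fun h => h1 (congrArg _ h), h2⟩
  · rintro ⟨h1, h2⟩
    exact ⟨fun h => h1 (Subtype.ext h), h2⟩

end compl

/-- For a perfect graph `G` (i.e. `χ(G_X) = ω(G_X)` and `α(G_X) = θ(G_X)` for every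
finite `X`) and a positive integer `k`:
(a) `χ(G) ≤ k` iff `χ(G_X) ≤ k` for every `X ⊆ V` with `|X| = k + 1`, and
(b) `θ(G) ≤ k` iff `θ(G_X) ≤ k` for every `X ⊆ V` with `|X| = k + 1`. -/
theorem perfect_coloring_covering_reflection {V : Type u} (G : SimpleGraph V)
    (hperf : ∀ X : Set V, X.Finite →
      cardChromNum (G.induce X) = cardCliqueNum (G.induce X) ∧
      cardStabilityNum (G.induce X) = cliqueCoverNum (G.induce X))
    (k : ℕ) (hk : 0 < k) :
    (cardChromNum G ≤ k ↔
      ∀ X : Set V, #X = (k : Cardinal.{u}) + 1 → cardChromNum (G.induce X) ≤ k) ∧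
    (cliqueCoverNum G ≤ k ↔
      ∀ X : Set V, #X = (k : Cardinal.{u}) + 1 → cliqueCoverNum (G.induce X) ≤ k) := by
  constructor
  · exact main_chrom G k (fun X hX => (hperf X hX).1)
  · have hperf' : ∀ X : Set V, X.Finite →
        cardChromNum (Gᶜ.induce X) = cardCliqueNum (Gᶜ.induce X) := by
      intro X hX
      rw [induce_compl, cardChromNum_compl, cardCliqueNum_compl, ← (hperf X hX).2]
    have hmain := main_chrom Gᶜ k hperf'
    rw [cardChromNum_compl] at hmain
    convert hmain using 2 with X hX
    rw [induce_compl, cardChromNum_compl]
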